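/- arXiv:2205.01985 — 2 statements merged into one kernel-verified Lean document; each statement's English description precedes it below -/
import Mathlib

section
/- Let G=(V,E) be a finite simple undirected graph with β_e > 1 for all e ∈ E and 0 < λ_v ≤ 1 for all v ∈ V, and let the weighted random cluster model have edge parameters q_e = 1 − 1/β_e and vertex weights λ. Then P_{I→R} and P_{R→I} are adjoint with respect to the stationary inner products: for all functions f : {0,1}^V → ℝ and g : 2^E → ℝ, Σ_{σ∈{0,1}^V} π_Ising(σ)·f(σ)·(Σ_{S⊆E} P_{I→R}(σ,S)·g(S)) = Σ_{S⊆E} π_wrc(S)·g(S)·(Σ_{σ∈{0,1}^V} P_{R→I}(S,σ)·f(σ)). -/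
/-!
Detailed balance. For `S ⊆ M(σ)` the products over `M(σ) \ S` and `E \ S` cancel against
`∏_{e ∈ E} β_e`, and the cluster factors of `P_{R→I}` cancel against those of `wt_wrc`, so
`wt_Ising(σ) P_{I→R}(σ,S) = (∏_{e ∈ E} β_e) · wt_wrc(S) P_{R→I}(S,σ)`: both equal
`∏_{e ∈ S} (β_e - 1) ∏_v λ_v^{σ(v)}`, the Edwards–Sokal coupling. Summing over `S` and `σ`, where
both kernels are stochastic, gives `Z_Ising = (∏_{e ∈ E} β_e) · Z_wrc`; hence
`π_Ising(σ) P_{I→R}(σ,S) = π_wrc(S) P_{R→I}(S,σ)`, and adjointness follows by exchanging sums.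
-/

open Finset
open scoped Classical

noncomputable section

variable {V : Type*} [Fintype V] [DecidableEq V]

/-- The vertex set of the connected component of `v` in the graph `(V, S)`. -/
def compOf (S : Finset (Sym2 V)) (v : V) : Finset V :=
  Finset.univ.filter fun u => (SimpleGraph.fromEdgeSet (↑S : Set (Sym2 V))).Reachable v u

/-- `κ(V,S)`: the set of vertex sets of connected components of the graph `(V, S)`. -/
def kappa (S : Finset (Sym2 V)) : Finset (Finset V) :=
  Finset.univ.image (compOf S)

/-- `∏_{C ∈ κ(V,S)} (1 + ∏_{u ∈ C} λ_u)`. -/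
def clusterProd (S : Finset (Sym2 V)) (lam : V → ℝ) : ℝ :=
  ∏ C ∈ kappa S, (1 + ∏ u ∈ C, lam u)

/-- Weight of an edge subset `S ⊆ E₀` in the weighted random cluster model. -/
def wtWRC (E₀ : Finset (Sym2 V)) (q : Sym2 V → ℝ) (lam : V → ℝ) (S : Finset (Sym2 V)) : ℝ :=
  (∏ e ∈ S, q e) * (∏ f ∈ E₀ \ S, (1 - q f)) * clusterProd S lam

/-- Partition function of the weighted random cluster model. -/
def ZWRC (E₀ : Finset (Sym2 V)) (q : Sym2 V → ℝ) (lam : V → ℝ) : ℝ :=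
  ∑ S ∈ E₀.powerset, wtWRC E₀ q lam S

/-- The weighted random cluster distribution. -/
def piWRC (E₀ : Finset (Sym2 V)) (q : Sym2 V → ℝ) (lam : V → ℝ) (S : Finset (Sym2 V)) : ℝ :=
  wtWRC E₀ q lam S / ZWRC E₀ q lam

/-- The monochromatic edges of a spin configuration `σ`. -/
def monoEdges (E₀ : Finset (Sym2 V)) (σ : V → Bool) : Finset (Sym2 V) :=
  E₀.filter fun e => (e.map σ).IsDiag

/-- Weight of a spin configuration in the Ising model. -/
def wtIsing (E₀ : Finset (Sym2 V)) (β : Sym2 V → ℝ) (lam : V → ℝ) (σ : V → Bool) : ℝ :=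
  (∏ e ∈ monoEdges E₀ σ, β e) * ∏ v : V, (if σ v then lam v else 1)

/-- Ising partition function. -/
def ZIsing (E₀ : Finset (Sym2 V)) (β : Sym2 V → ℝ) (lam : V → ℝ) : ℝ :=
  ∑ σ : V → Bool, wtIsing E₀ β lam σ

/-- Ising Gibbs distribution. -/
def piIsing (E₀ : Finset (Sym2 V)) (β : Sym2 V → ℝ) (lam : V → ℝ) (σ : V → Bool) : ℝ :=
  wtIsing E₀ β lam σ / ZIsing E₀ β lam

/-- Vertices of odd degree in the graph `(V, S)`. -/
def oddVerts (S : Finset (Sym2 V)) : Finset V :=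
  Finset.univ.filter fun v => Odd (S.filter fun e => v ∈ e).card

/-- Weight of an edge subset in the subgraph-world model. -/
def wtSG (E₀ : Finset (Sym2 V)) (p : Sym2 V → ℝ) (η : V → ℝ) (S : Finset (Sym2 V)) : ℝ :=
  (∏ e ∈ S, p e) * (∏ f ∈ E₀ \ S, (1 - p f)) * ∏ v ∈ oddVerts S, η v

/-- Subgraph-world partition function. -/
def ZSG (E₀ : Finset (Sym2 V)) (p : Sym2 V → ℝ) (η : V → ℝ) : ℝ :=
  ∑ S ∈ E₀.powerset, wtSG E₀ p η S

/-- Subgraph-world distribution. -/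
def piSG (E₀ : Finset (Sym2 V)) (p : Sym2 V → ℝ) (η : V → ℝ) (S : Finset (Sym2 V)) : ℝ :=
  wtSG E₀ p η S / ZSG E₀ p η

/-- The transformation `P_{I→R}` from Ising configurations to edge subsets. -/
def PIR (E₀ : Finset (Sym2 V)) (β : Sym2 V → ℝ) (σ : V → Bool) (S : Finset (Sym2 V)) : ℝ :=
  if S ⊆ monoEdges E₀ σ then
    (∏ e ∈ S, (1 - (β e)⁻¹)) * ∏ f ∈ monoEdges E₀ σ \ S, (β f)⁻¹
  else 0

/-- The transformation `P_{R→I}` from edge subsets to Ising configurations. -/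
def PRI (E₀ : Finset (Sym2 V)) (lam : V → ℝ) (S : Finset (Sym2 V)) (σ : V → Bool) : ℝ :=
  if S ⊆ monoEdges E₀ σ then
    ∏ C ∈ kappa S, ((∏ v ∈ C, if σ v then lam v else 1) / (1 + ∏ v ∈ C, lam v))
  else 0

/-- Swendsen-Wang dynamics for the Ising model: `P_{I→R} ⬝ P_{R→I}`. -/
def PSWIsing (E₀ : Finset (Sym2 V)) (β : Sym2 V → ℝ) (lam : V → ℝ) (σ τ : V → Bool) : ℝ :=
  ∑ S ∈ E₀.powerset, PIR E₀ β σ S * PRI E₀ lam S τ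

/-- Swendsen-Wang dynamics for the weighted random cluster model: `P_{R→I} ⬝ P_{I→R}`. -/
def PSWwrc (E₀ : Finset (Sym2 V)) (β : Sym2 V → ℝ) (lam : V → ℝ)
    (S S' : Finset (Sym2 V)) : ℝ :=
  ∑ σ : V → Bool, PRI E₀ lam S σ * PIR E₀ β σ S'

/-- Lazy edge-flipping (Metropolis) dynamics for a distribution `pi` on subsets of `E₀`. -/
def PEF (E₀ : Finset (Sym2 V)) (pi : Finset (Sym2 V) → ℝ) (x y : Finset (Sym2 V)) : ℝ :=
  if x = y then
    1 - (1 / (2 * (E₀.card : ℝ))) * ∑ e ∈ E₀, min 1 (pi (symmDiff x {e}) / pi x)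
  else if (symmDiff x y).card = 1 then
    (1 / (2 * (E₀.card : ℝ))) * min 1 (pi y / pi x)
  else 0

/-- Variance of `f` with respect to a distribution `pi` supported on `states`. -/
def varOn {α : Type*} (states : Finset α) (pi f : α → ℝ) : ℝ :=
  (∑ x ∈ states, pi x * f x ^ 2) - (∑ x ∈ states, pi x * f x) ^ 2

/-- Dirichlet form of a Markov kernel `P` with stationary distribution `pi` on `states`. -/
def dirichletOn {α : Type*} (states : Finset α) (pi : α → ℝ) (P : α → α → ℝ) (f : α → ℝ) : ℝ :=
  ∑ x ∈ states, pi x * f x * (f x - ∑ y ∈ states, P x y * f y)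

/-- Spectral gap of a reversible Markov kernel `P` with stationary distribution `pi`. -/
def gapOn {α : Type*} (states : Finset α) (pi : α → ℝ) (P : α → α → ℝ) : ℝ :=
  sInf ((fun f : α → ℝ => dirichletOn states pi P f / varOn states pi f) ''
    {f | varOn states pi f ≠ 0})

/-- Total variation distance between two distributions on `states`. -/
def dTV {α : Type*} (states : Finset α) (μ ν : α → ℝ) : ℝ :=
  (1 / 2) * ∑ z ∈ states, |μ z - ν z|

/-- `t`-step transition probabilities of the Markov kernel `P` on state space `states`. -/
def kpow {α : Type*} (states : Finset α) (P : α → α → ℝ) : ℕ → α → α → ℝ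
  | 0 => fun x y => if x = y then 1 else 0
  | (t + 1) => fun x y => ∑ z ∈ states, P x z * kpow states P t z y

end

theorem Finset.sum_mul_sum_eq_sum_mul_sum_of_balance {α β R : Type*} [CommSemiring R]
    {s : Finset α} {t : Finset β} {π : α → R} {ρ : β → R} {P : α → β → R} {Q : β → α → R}
    (h : ∀ x ∈ s, ∀ y ∈ t, π x * P x y = ρ y * Q y x) (f : α → R) (g : β → R) :
    ∑ x ∈ s, π x * f x * ∑ y ∈ t, P x y * g y = ∑ y ∈ t, ρ y * g y * ∑ x ∈ s, Q y x * f x := by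
  simp_rw [Finset.mul_sum]
  rw [Finset.sum_comm]
  refine Finset.sum_congr rfl fun y hy => Finset.sum_congr rfl fun x hx => ?_
  calc π x * f x * (P x y * g y) = π x * P x y * (f x * g y) := by ring
    _ = ρ y * g y * (Q y x * f x) := by rw [h x hx y hy]; ring

theorem Fintype.sum_filter_factorsThrough {α ι β M : Type*} [Fintype α] [DecidableEq α]
    [Fintype ι] [DecidableEq ι] [Fintype β] [Nonempty β] [AddCommMonoid M]
    {c : α → ι} (hc : c.Surjective) (F : (α → β) → M) :
    ∑ σ : α → β with σ.FactorsThrough c, F σ = ∑ τ : ι → β, F (τ ∘ c) := by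
  have : (univ.filter fun σ : α → β => σ.FactorsThrough c) = univ.image (· ∘ c) := by
    ext σ
    simp [Function.factorsThrough_iff, eq_comm]
  rw [this, Finset.sum_image fun τ _ τ' _ h => hc.injective_comp_right h]

theorem Finset.prod_mul_prod_sdiff_inv {α K : Type*} [DecidableEq α] [CommGroupWithZero K]
    {s t : Finset α} {f : α → K} (hst : s ⊆ t) (hf : ∀ x ∈ t \ s, f x ≠ 0) :
    (∏ x ∈ t, f x) * ∏ x ∈ t \ s, (f x)⁻¹ = ∏ x ∈ s, f x := by
  rw [← Finset.prod_sdiff hst, Finset.prod_inv_distrib, mul_right_comm,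
    mul_inv_cancel₀ (Finset.prod_ne_zero_iff.2 hf), one_mul]

theorem one_add_prod_pos {ι : Type*} (s : Finset ι) {f : ι → ℝ} (hf : ∀ i ∈ s, 0 ≤ f i) :
    0 < 1 + ∏ i ∈ s, f i :=
  add_pos_of_pos_of_nonneg one_pos (Finset.prod_nonneg hf)

theorem forall_isDiag_map_iff_reachable {α β : Type*} {S : Set (Sym2 α)} {σ : α → β} :
    (∀ e ∈ S, (e.map σ).IsDiag) ↔
      ∀ a b, (SimpleGraph.fromEdgeSet S).Reachable a b → σ a = σ b := by
  constructor
  · intro h a b hab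
    rw [SimpleGraph.reachable_iff_reflTransGen] at hab
    induction hab with
    | refl => rfl
    | tail _ hadj ih =>
      rw [SimpleGraph.fromEdgeSet_adj] at hadj
      exact ih.trans (by simpa using h _ hadj.1)
  · intro h e he
    induction e using Sym2.ind with
    | _ a b =>
      rw [Sym2.map_mk, Sym2.mk_isDiag_iff]
      by_cases hab : a = b
      · rw [hab]
      · exact h a b ((SimpleGraph.fromEdgeSet_adj S).2 ⟨he, hab⟩).reachable

variable {V : Type*} [DecidableEq V]

theorem sum_PIR (E₀ : Finset (Sym2 V)) (β : Sym2 V → ℝ) (σ : V → Bool) :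
    ∑ S ∈ E₀.powerset, PIR E₀ β σ S = 1 := by
  have hM : (monoEdges E₀ σ).powerset ⊆ E₀.powerset :=
    Finset.powerset_mono.2 (Finset.filter_subset _ _)
  rw [← Finset.sum_subset hM fun S _ hS => by rw [PIR, if_neg (mt Finset.mem_powerset.2 hS)]]
  rw [Finset.sum_congr rfl fun S hS => by rw [PIR, if_pos (Finset.mem_powerset.1 hS)],
    ← Finset.prod_add]
  exact Finset.prod_eq_one fun e _ => sub_add_cancel _ _

section Components

variable [Fintype V]

theorem compOf_eq_compOf_iff {S : Finset (Sym2 V)} {a b : V} :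
    compOf S a = compOf S b ↔ (SimpleGraph.fromEdgeSet (↑S : Set (Sym2 V))).Reachable a b := by
  simp only [compOf, Finset.ext_iff, Finset.mem_filter, Finset.mem_univ, true_and]
  exact ⟨fun h => (h b).2 (.refl b), fun hab w => ⟨hab.symm.trans, hab.trans⟩⟩

theorem compOf_mem_kappa (S : Finset (Sym2 V)) (v : V) : compOf S v ∈ kappa S :=
  Finset.mem_image_of_mem _ (Finset.mem_univ v)

theorem mem_compOf_iff_compOf_eq {S : Finset (Sym2 V)} {u v : V} :
    u ∈ compOf S v ↔ compOf S u = compOf S v := by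
  rw [compOf_eq_compOf_iff, SimpleGraph.reachable_comm]
  simp [compOf]

theorem compOf_eq_iff_mem {S : Finset (Sym2 V)} {C : Finset V} (hC : C ∈ kappa S) {v : V} :
    compOf S v = C ↔ v ∈ C := by
  obtain ⟨a, -, rfl⟩ := Finset.mem_image.1 hC
  exact mem_compOf_iff_compOf_eq.symm

theorem prod_kappa_prod {M : Type*} [CommMonoid M] (S : Finset (Sym2 V)) (h : V → M) :
    ∏ C ∈ kappa S, ∏ v ∈ C, h v = ∏ v, h v :=
  Finset.prod_image' h fun v _ => by
    congr 1
    ext u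
    simp [mem_compOf_iff_compOf_eq]

noncomputable def toKappa (S : Finset (Sym2 V)) (v : V) : kappa S :=
  ⟨compOf S v, compOf_mem_kappa S v⟩

theorem toKappa_surjective (S : Finset (Sym2 V)) : (toKappa S).Surjective := by
  rintro ⟨C, hC⟩
  obtain ⟨v, -, rfl⟩ := Finset.mem_image.1 hC
  exact ⟨v, rfl⟩

theorem subset_monoEdges_iff {E₀ S : Finset (Sym2 V)} (hS : S ⊆ E₀) (σ : V → Bool) :
    S ⊆ monoEdges E₀ σ ↔ σ.FactorsThrough (toKappa S) := by
  have : S ⊆ monoEdges E₀ σ ↔ ∀ e ∈ (↑S : Set (Sym2 V)), (e.map σ).IsDiag := by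
    simp only [monoEdges, Finset.subset_iff, Finset.mem_filter, Finset.mem_coe]
    exact ⟨fun h e he => (h he).2, fun h e he => ⟨hS he, h e he⟩⟩
  rw [this, forall_isDiag_map_iff_reachable]
  simp only [Function.FactorsThrough, toKappa, Subtype.mk.injEq, compOf_eq_compOf_iff]

theorem sum_PRI {E₀ S : Finset (Sym2 V)} (hS : S ⊆ E₀) {lam : V → ℝ} (hlam : ∀ v, 0 ≤ lam v) :
    ∑ σ : V → Bool, PRI E₀ lam S σ = 1 := by
  have hfactor (τ : kappa S → Bool) :
      ∏ C ∈ kappa S, (∏ v ∈ C, if (τ ∘ toKappa S) v then lam v else 1) / (1 + ∏ v ∈ C, lam v) =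
        ∏ C : kappa S, (if τ C then ∏ v ∈ C.1, lam v else 1) / (1 + ∏ v ∈ C.1, lam v) := by
    rw [← Finset.prod_coe_sort (kappa S)]
    refine Fintype.prod_congr _ _ fun C => ?_
    have hC : ∀ v ∈ C.1, toKappa S v = C := fun v hv =>
      Subtype.ext ((compOf_eq_iff_mem C.2).2 hv)
    rw [Finset.prod_congr rfl fun v hv => by rw [Function.comp_apply, hC v hv]]
    simp only [Finset.prod_ite_irrel, Finset.prod_const_one]
  -- `S ⊆ M(σ)` iff `σ = τ ∘ toKappa S`, so the sum runs over `τ : κ(V,S) → Bool` and factorizes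
  -- over the components.
  simp only [PRI, subset_monoEdges_iff hS]
  rw [← Finset.sum_filter, Fintype.sum_filter_factorsThrough (toKappa_surjective S)]
  simp only [hfactor]
  rw [← Fintype.prod_sum fun (C : kappa S) (b : Bool) =>
    (if b then ∏ v ∈ C.1, lam v else 1) / (1 + ∏ v ∈ C.1, lam v)]
  refine Finset.prod_eq_one fun C _ => ?_
  rw [Fintype.sum_bool, if_pos rfl, if_neg Bool.false_ne_true, ← add_div, add_comm,
    div_self (one_add_prod_pos C.1 fun v _ => hlam v).ne']

theorem PRI_mul_clusterProd {E₀ S : Finset (Sym2 V)} {σ : V → Bool} (hσ : S ⊆ monoEdges E₀ σ)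
    {lam : V → ℝ} (hlam : ∀ v, 0 ≤ lam v) :
    PRI E₀ lam S σ * clusterProd S lam = ∏ v, if σ v then lam v else 1 := by
  rw [PRI, if_pos hσ, clusterProd, ← Finset.prod_mul_distrib, ← prod_kappa_prod S]
  refine Finset.prod_congr rfl fun C _ => ?_
  exact div_mul_cancel₀ _ (one_add_prod_pos C fun v _ => hlam v).ne'

theorem wtIsing_mul_PIR {E₀ S : Finset (Sym2 V)} (hS : S ⊆ E₀) {β : Sym2 V → ℝ}
    (hβ : ∀ e ∈ E₀, β e ≠ 0) {lam : V → ℝ} (hlam : ∀ v, 0 ≤ lam v) (σ : V → Bool) :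
    wtIsing E₀ β lam σ * PIR E₀ β σ S =
      (∏ e ∈ E₀, β e) * (wtWRC E₀ (fun e => 1 - (β e)⁻¹) lam S * PRI E₀ lam S σ) := by
  by_cases hσ : S ⊆ monoEdges E₀ σ
  · have hM := Finset.prod_mul_prod_sdiff_inv hσ fun e he =>
      hβ e (Finset.filter_subset _ _ (Finset.sdiff_subset he))
    have hE := Finset.prod_mul_prod_sdiff_inv hS fun e he => hβ e (Finset.sdiff_subset he)
    rw [wtIsing, wtWRC, PIR, if_pos hσ, ← PRI_mul_clusterProd hσ hlam]
    simp only [sub_sub_cancel]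
    linear_combination (∏ e ∈ S, (1 - (β e)⁻¹)) * PRI E₀ lam S σ * clusterProd S lam * (hM - hE)
  · rw [PIR, PRI, if_neg hσ, if_neg hσ, mul_zero, mul_zero, mul_zero]

theorem ZIsing_eq_prod_mul_ZWRC {E₀ : Finset (Sym2 V)} {β : Sym2 V → ℝ}
    (hβ : ∀ e ∈ E₀, β e ≠ 0) {lam : V → ℝ} (hlam : ∀ v, 0 ≤ lam v) :
    ZIsing E₀ β lam = (∏ e ∈ E₀, β e) * ZWRC E₀ (fun e => 1 - (β e)⁻¹) lam := by
  calc ZIsing E₀ β lam = ∑ σ, ∑ S ∈ E₀.powerset, wtIsing E₀ β lam σ * PIR E₀ β σ S := by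
        simp only [← Finset.mul_sum, sum_PIR, mul_one, ZIsing]
    _ = ∑ S ∈ E₀.powerset, (∏ e ∈ E₀, β e) *
          (wtWRC E₀ (fun e => 1 - (β e)⁻¹) lam S * ∑ σ, PRI E₀ lam S σ) := by
        rw [Finset.sum_comm]
        refine Finset.sum_congr rfl fun S hS => ?_
        simp only [Finset.mul_sum, wtIsing_mul_PIR (Finset.mem_powerset.1 hS) hβ hlam]
    _ = (∏ e ∈ E₀, β e) * ZWRC E₀ (fun e => 1 - (β e)⁻¹) lam := by
        rw [ZWRC, Finset.mul_sum]
        refine Finset.sum_congr rfl fun S hS => ?_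
        rw [sum_PRI (Finset.mem_powerset.1 hS) hlam, mul_one]

theorem piIsing_mul_PIR {E₀ S : Finset (Sym2 V)} (hS : S ⊆ E₀) {β : Sym2 V → ℝ}
    (hβ : ∀ e ∈ E₀, β e ≠ 0) {lam : V → ℝ} (hlam : ∀ v, 0 ≤ lam v) (σ : V → Bool) :
    piIsing E₀ β lam σ * PIR E₀ β σ S =
      piWRC E₀ (fun e => 1 - (β e)⁻¹) lam S * PRI E₀ lam S σ := by
  rw [piIsing, piWRC, div_mul_eq_mul_div, wtIsing_mul_PIR hS hβ hlam,
    ZIsing_eq_prod_mul_ZWRC hβ hlam, mul_div_mul_left _ _ (Finset.prod_ne_zero_iff.2 hβ),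
    div_mul_eq_mul_div]

end Components

/-- `P_{I→R}` and `P_{R→I}` are adjoint with respect to the stationary inner products,
with `q_e = 1 − 1/β_e`. -/
theorem pir_pri_adjoint {V : Type*} [Fintype V] [DecidableEq V]
    (G : SimpleGraph V) [DecidableRel G.Adj]
    (β : Sym2 V → ℝ) (lam : V → ℝ)
    (hβ : ∀ e ∈ G.edgeFinset, 1 < β e)
    (hlam : ∀ v : V, 0 < lam v ∧ lam v ≤ 1) :
    ∀ (f : (V → Bool) → ℝ) (g : Finset (Sym2 V) → ℝ),
      (∑ σ : V → Bool, piIsing G.edgeFinset β lam σ * f σ *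
          (∑ S ∈ G.edgeFinset.powerset, PIR G.edgeFinset β σ S * g S)) =
        ∑ S ∈ G.edgeFinset.powerset,
          piWRC G.edgeFinset (fun e => 1 - (β e)⁻¹) lam S * g S *
            (∑ σ : V → Bool, PRI G.edgeFinset lam S σ * f σ) :=
  Finset.sum_mul_sum_eq_sum_mul_sum_of_balance fun σ _ _ hS =>
    piIsing_mul_PIR (Finset.mem_powerset.1 hS) (fun e he => (one_pos.trans (hβ e he)).ne')
      (fun v => (hlam v).1.le) σ
end

section
/- Let G=(V,E) be a finite simple undirected graph with n=|V| vertices, let 0 < p_e < 1/2 for all e ∈ E and 0 < λ_v ≤ 1 for all v ∈ V, and set η_v = (1−λ_v)/(1+λ_v). Define the perturbed parameters η̂_v = 1/n if η_v ≤ 1/n and η̂_v = η_v otherwise, and λ̂_v = (1−η̂_v)/(1+η̂_v). Let π_wrc be the weighted random cluster distribution with edge parameters (2p_e)_{e∈E} and vertex weights λ, and let π̂_wrc be the weighted random cluster distribution with edge parameters (2p_e)_{e∈E} and vertex weights λ̂. Then for every R ⊆ E, 1/9 ≤ π̂_wrc(R)/π_wrc(R) < e (where e is Euler's number). -/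
/-!
Write `b = (n - 1) / (n + 1)`, the value of `λ` at `η = 1 / n`. Since `η̂_v = max η_v (1/n)`,
every perturbed vertex weight satisfies `b λ_v ≤ λ̂_v ≤ λ_v`. Cluster weights `1 + ∏_{u ∈ C} λ_u`
can therefore only decrease, and by convexity of `t ↦ t ^ |C|` (with `∏ λ ≤ 1`) a cluster loses at
most the factor `((1 + b) / 2) ^ |C| = (n / (n + 1)) ^ |C|`. The clusters partition `V`, so every
random cluster weight, hence also the partition function, shrinks by a factor in `[ρ, 1]` with
`ρ = (1 + 1/n)⁻ⁿ > e⁻¹`. The ratio of the two distributions thus lies in `[ρ, ρ⁻¹] ⊆ (e⁻¹, e)`,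
and `e⁻¹ > 1/9`.
-/

open Finset
open scoped Classical

noncomputable section

variable {V : Type*} [Fintype V] [DecidableEq V]

open Real

lemma one_add_inv_pow_lt_exp_one (n : ℕ) : (1 + (n : ℝ)⁻¹) ^ n < exp 1 := by
  rcases Nat.eq_zero_or_pos n with rfl | hn
  · simp
  · have hn' : (n : ℝ) ≠ 0 := by positivity
    calc (1 + (n : ℝ)⁻¹) ^ n < exp (n : ℝ)⁻¹ ^ n := by
          gcongr
          linarith [add_one_lt_exp (inv_ne_zero hn')]
      _ = exp 1 := by rw [← exp_nat_mul, mul_inv_cancel₀ hn']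

lemma one_add_div_two_pow_le {b : ℝ} (hb : 0 ≤ b) (k : ℕ) :
    ((1 + b) / 2) ^ k ≤ (1 + b ^ k) / 2 := by
  rcases k with _ | k
  · norm_num
  · have h := add_pow_le zero_le_one hb (k + 1)
    rw [Nat.add_sub_cancel, one_pow] at h
    rw [div_pow, div_le_div_iff₀ (by positivity) two_pos, pow_succ (2 : ℝ)]
    nlinarith [pow_pos (two_pos (α := ℝ)) k]

lemma one_add_div_two_pow_mul_le {b P : ℝ} (hb0 : 0 ≤ b) (hb1 : b ≤ 1) (hP0 : 0 ≤ P)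
    (hP1 : P ≤ 1) (k : ℕ) :
    ((1 + b) / 2) ^ k * (1 + P) ≤ 1 + b ^ k * P := by
  have hbk : b ^ k ≤ 1 := pow_le_one₀ hb0 hb1
  calc ((1 + b) / 2) ^ k * (1 + P) ≤ (1 + b ^ k) / 2 * (1 + P) := by
        gcongr
        exact one_add_div_two_pow_le hb0 k
    _ ≤ 1 + b ^ k * P := by nlinarith [mul_nonneg (sub_nonneg.2 hbk) (sub_nonneg.2 hP1)]

lemma lam_bounds_of_eta_clamp {l η ηh lh ε : ℝ} (hε0 : 0 ≤ ε) (hε1 : ε ≤ 1) (hl0 : 0 < l)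
    (hl1 : l ≤ 1) (hη : η = (1 - l) / (1 + l)) (hηh : ηh = if η ≤ ε then ε else η)
    (hlh : lh = (1 - ηh) / (1 + ηh)) :
    (1 - ε) / (1 + ε) * l ≤ lh ∧ lh ≤ l := by
  have hl : l = (1 - η) / (1 + η) := by rw [hη]; field_simp; ring
  have hb0 : 0 ≤ (1 - ε) / (1 + ε) := by positivity
  split_ifs at hηh with hc
  · have hη0 : 0 ≤ η := by rw [hη]; exact div_nonneg (by linarith) (by linarith)
    have hbl : (1 - ε) / (1 + ε) ≤ l := by
      rw [hl, div_le_div_iff₀ (by linarith) (by linarith)]; nlinarith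
    rw [hlh, hηh]
    exact ⟨mul_le_of_le_one_right hb0 hl1, hbl⟩
  · have hb1 : (1 - ε) / (1 + ε) ≤ 1 := (div_le_one (by linarith)).2 (by linarith)
    rw [hlh, hηh, ← hl]
    exact ⟨mul_le_of_le_one_left hl0.le hb1, le_rfl⟩

lemma div_sum_div_div_sum_mem_Icc {ι : Type*} {s : Finset ι} {w w' : ι → ℝ} {ρ : ℝ}
    (hρ : 0 < ρ) (hw : ∀ i ∈ s, 0 < w i) (hlo : ∀ i ∈ s, ρ * w i ≤ w' i)
    (hhi : ∀ i ∈ s, w' i ≤ w i) {j : ι} (hj : j ∈ s) :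
    (w' j / ∑ i ∈ s, w' i) / (w j / ∑ i ∈ s, w i) ∈ Set.Icc ρ ρ⁻¹ := by
  set Z := ∑ i ∈ s, w i
  set Z' := ∑ i ∈ s, w' i
  have hZ : 0 < Z := sum_pos hw ⟨j, hj⟩
  have hZlo : ρ * Z ≤ Z' := by rw [mul_sum]; exact sum_le_sum hlo
  have hZhi : Z' ≤ Z := sum_le_sum hhi
  have hZ' : 0 < Z' := (mul_pos hρ hZ).trans_le hZlo
  have hwj := hw j hj
  have hw'j : 0 ≤ w' j := (mul_pos hρ hwj).le.trans (hlo j hj)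
  rw [div_div_div_eq, Set.mem_Icc, le_div_iff₀ (by positivity), div_le_iff₀ (by positivity)]
  constructor
  · calc ρ * (Z' * w j) = ρ * w j * Z' := by ring
      _ ≤ w' j * Z := mul_le_mul (hlo j hj) hZhi hZ'.le hw'j
  · calc w' j * Z = ρ⁻¹ * (w' j * (ρ * Z)) := by field_simp
      _ ≤ ρ⁻¹ * (w j * Z') := by gcongr; exact hhi j hj
      _ = ρ⁻¹ * (Z' * w j) := by ring

lemma mem_compOf {S : Finset (Sym2 V)} {u v : V} :
    u ∈ compOf S v ↔ (SimpleGraph.fromEdgeSet (S : Set (Sym2 V))).Reachable v u := by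
  simp [compOf]

lemma compOf_eq_compOf_iff_s14 {S : Finset (Sym2 V)} {u v : V} :
    compOf S u = compOf S v ↔ u ∈ compOf S v := by
  refine ⟨fun h => h ▸ mem_compOf.2 .rfl, fun h => ?_⟩
  ext w
  simp only [mem_compOf] at h ⊢
  exact ⟨fun hw => h.trans hw, fun hw => h.symm.trans hw⟩

lemma sum_card_kappa (S : Finset (Sym2 V)) : ∑ C ∈ kappa S, C.card = Fintype.card V := by
  rw [← card_univ, card_eq_sum_card_image (compOf S)]
  refine sum_congr rfl fun C hC => ?_
  obtain ⟨v, -, rfl⟩ := mem_image.1 hC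
  congr 1
  ext u
  simp [compOf_eq_compOf_iff_s14]

lemma clusterProd_le_clusterProd {S : Finset (Sym2 V)} {lam lam' : V → ℝ}
    (h0 : ∀ v, 0 ≤ lam' v) (hle : ∀ v, lam' v ≤ lam v) :
    clusterProd S lam' ≤ clusterProd S lam := by
  refine prod_le_prod (fun C _ => ?_) fun C _ => ?_
  · have := prod_nonneg fun u (_ : u ∈ C) => h0 u
    positivity
  · gcongr with u
    exacts [fun u _ => h0 u, hle u]

lemma one_add_div_two_pow_mul_clusterProd_le {S : Finset (Sym2 V)} {lam lam' : V → ℝ} {b : ℝ}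
    (hb0 : 0 ≤ b) (hb1 : b ≤ 1) (hlam0 : ∀ v, 0 ≤ lam v) (hlam1 : ∀ v, lam v ≤ 1)
    (hle : ∀ v, b * lam v ≤ lam' v) :
    ((1 + b) / 2) ^ Fintype.card V * clusterProd S lam ≤ clusterProd S lam' := by
  rw [← sum_card_kappa S, ← prod_pow_eq_pow_sum, clusterProd, clusterProd, ← prod_mul_distrib]
  refine prod_le_prod (fun C _ => ?_) fun C _ => ?_
  · have := prod_nonneg fun u (_ : u ∈ C) => hlam0 u
    positivity
  · calc ((1 + b) / 2) ^ C.card * (1 + ∏ u ∈ C, lam u)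
        ≤ 1 + b ^ C.card * ∏ u ∈ C, lam u :=
          one_add_div_two_pow_mul_le hb0 hb1 (prod_nonneg fun u _ => hlam0 u)
            (prod_le_one (fun u _ => hlam0 u) fun u _ => hlam1 u) _
      _ = 1 + ∏ u ∈ C, b * lam u := by rw [prod_mul_distrib, prod_const]
      _ ≤ 1 + ∏ u ∈ C, lam' u := by
          gcongr with u
          exacts [fun u _ => mul_nonneg hb0 (hlam0 u), hle u]

lemma clusterProd_perturb_bounds {lam η ηh lamh : V → ℝ} (hlam : ∀ v, 0 < lam v ∧ lam v ≤ 1)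
    (hη : ∀ v, η v = (1 - lam v) / (1 + lam v))
    (hηh : ∀ v, ηh v =
      if η v ≤ 1 / (Fintype.card V : ℝ) then 1 / (Fintype.card V : ℝ) else η v)
    (hlamh : ∀ v, lamh v = (1 - ηh v) / (1 + ηh v)) (S : Finset (Sym2 V)) :
    ((1 + (Fintype.card V : ℝ)⁻¹) ^ Fintype.card V)⁻¹ * clusterProd S lam ≤ clusterProd S lamh ∧
      clusterProd S lamh ≤ clusterProd S lam := by
  rcases isEmpty_or_nonempty V with hV | hV
  · simp [Subsingleton.elim lamh lam]
  set ε := (Fintype.card V : ℝ)⁻¹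
  have hε0 : 0 ≤ ε := by positivity
  have hε1 : ε ≤ 1 := inv_le_one_of_one_le₀ (mod_cast Fintype.card_pos)
  have hb0 : 0 ≤ (1 - ε) / (1 + ε) := by positivity
  have hb1 : (1 - ε) / (1 + ε) ≤ 1 := (div_le_one (by linarith)).2 (by linarith)
  have hlam0 v : 0 ≤ lam v := (hlam v).1.le
  have hv v := lam_bounds_of_eta_clamp hε0 hε1 (hlam v).1 (hlam v).2 (hη v)
    (by simpa only [one_div] using hηh v) (hlamh v)
  have hc : (1 + (1 - ε) / (1 + ε)) / 2 = (1 + ε)⁻¹ := by field_simp; ring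
  constructor
  · rw [← inv_pow, ← hc]
    exact one_add_div_two_pow_mul_clusterProd_le hb0 hb1 hlam0 (fun v => (hlam v).2)
      fun v => (hv v).1
  · exact clusterProd_le_clusterProd (fun v => (mul_nonneg hb0 (hlam0 v)).trans (hv v).1)
      fun v => (hv v).2

lemma mul_wtWRC_le_wtWRC {E₀ S : Finset (Sym2 V)} {q : Sym2 V → ℝ} {lam lam' : V → ℝ} {c : ℝ}
    (hq : ∀ e ∈ E₀, q e ∈ Set.Icc 0 1) (hS : S ⊆ E₀)
    (h : c * clusterProd S lam ≤ clusterProd S lam') :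
    c * wtWRC E₀ q lam S ≤ wtWRC E₀ q lam' S := by
  have hedge : 0 ≤ (∏ e ∈ S, q e) * ∏ f ∈ E₀ \ S, (1 - q f) :=
    mul_nonneg (prod_nonneg fun e he => (hq e (hS he)).1)
      (prod_nonneg fun f hf => sub_nonneg.2 (hq f (mem_sdiff.1 hf).1).2)
  rw [wtWRC, wtWRC, mul_left_comm]
  exact mul_le_mul_of_nonneg_left h hedge

lemma wtWRC_pos {E₀ S : Finset (Sym2 V)} {q : Sym2 V → ℝ} {lam : V → ℝ}
    (hq : ∀ e ∈ E₀, q e ∈ Set.Ioo 0 1) (hS : S ⊆ E₀) (hlam : ∀ v, 0 ≤ lam v) :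
    0 < wtWRC E₀ q lam S := by
  refine mul_pos (mul_pos (prod_pos fun e he => (hq e (hS he)).1)
    (prod_pos fun f hf => sub_pos.2 (hq f (mem_sdiff.1 hf).1).2)) (prod_pos fun C _ => ?_)
  have := prod_nonneg fun u (_ : u ∈ C) => hlam u
  positivity

lemma piWRC_div_piWRC_mem_Icc {E₀ R : Finset (Sym2 V)} {q : Sym2 V → ℝ} {lam lam' : V → ℝ}
    {ρ : ℝ} (hq : ∀ e ∈ E₀, q e ∈ Set.Ioo 0 1) (hlam : ∀ v, 0 ≤ lam v) (hρ : 0 < ρ)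
    (hcluster : ∀ S ⊆ E₀,
      ρ * clusterProd S lam ≤ clusterProd S lam' ∧ clusterProd S lam' ≤ clusterProd S lam)
    (hR : R ∈ E₀.powerset) :
    piWRC E₀ q lam' R / piWRC E₀ q lam R ∈ Set.Icc ρ ρ⁻¹ := by
  have hq' e he : q e ∈ Set.Icc 0 1 := Set.Ioo_subset_Icc_self (hq e he)
  refine div_sum_div_div_sum_mem_Icc hρ (fun S hS => wtWRC_pos hq (mem_powerset.1 hS) hlam)
    (fun S hS => mul_wtWRC_le_wtWRC hq' (mem_powerset.1 hS) (hcluster S (mem_powerset.1 hS)).1)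
    (fun S hS => ?_) hR
  have h := (hcluster S (mem_powerset.1 hS)).2
  rw [← one_mul (clusterProd S lam')] at h
  simpa only [one_mul] using mul_wtWRC_le_wtWRC hq' (mem_powerset.1 hS) h

/-- Comparison of the weighted random cluster distribution with its perturbed version:
replacing `η_v = (1−λ_v)/(1+λ_v)` by `η̂_v = max{η_v, 1/n}` (i.e. `λ_v` by
`λ̂_v = (1−η̂_v)/(1+η̂_v)`) changes every probability by a factor in `[1/9, e)`. -/
theorem wrc_perturb_dist_ratio {V : Type*} [Fintype V] [DecidableEq V]
    (G : SimpleGraph V) [DecidableRel G.Adj]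
    (p : Sym2 V → ℝ) (lam η ηh lamh : V → ℝ)
    (hp : ∀ e ∈ G.edgeFinset, 0 < p e ∧ p e < 1 / 2)
    (hlam : ∀ v : V, 0 < lam v ∧ lam v ≤ 1)
    (hη : ∀ v : V, η v = (1 - lam v) / (1 + lam v))
    (hηh : ∀ v : V, ηh v =
      if η v ≤ 1 / (Fintype.card V : ℝ) then 1 / (Fintype.card V : ℝ) else η v)
    (hlamh : ∀ v : V, lamh v = (1 - ηh v) / (1 + ηh v)) :
    ∀ R ∈ G.edgeFinset.powerset,
      1 / 9 ≤ piWRC G.edgeFinset (fun e => 2 * p e) lamh R /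
          piWRC G.edgeFinset (fun e => 2 * p e) lam R ∧
        piWRC G.edgeFinset (fun e => 2 * p e) lamh R /
          piWRC G.edgeFinset (fun e => 2 * p e) lam R < Real.exp 1 := by
  intro R hR
  have hK : (1 + (Fintype.card V : ℝ)⁻¹) ^ Fintype.card V < exp 1 := one_add_inv_pow_lt_exp_one _
  have hq e he : 2 * p e ∈ Set.Ioo (0 : ℝ) 1 := ⟨by linarith [hp e he], by linarith [hp e he]⟩
  obtain ⟨hlo, hhi⟩ := piWRC_div_piWRC_mem_Icc hq (fun v => (hlam v).1.le) (by positivity)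
    (fun S _ => clusterProd_perturb_bounds hlam hη hηh hlamh S) hR
  rw [inv_inv] at hhi
  refine ⟨le_trans ?_ hlo, hhi.trans_lt hK⟩
  rw [one_div]
  exact inv_anti₀ (by positivity) (hK.trans (exp_one_lt_d9.trans (by norm_num))).le

end
end
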